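/- Let A and B be symmetric positive definite d×d real matrices whose smallest eigenvalues are both at least C > 0. Then ‖A^{1/2} − B^{1/2}‖₂ ≤ ‖A − B‖₂ / (2√C), where ‖·‖₂ is the spectral (operator) norm and A^{1/2} is the positive definite square root of A. -/

import Mathlib

/-!
Put `X = √A - √B`. Then `A - B = √A X + X √B`, so for a unit eigenvector `v` of `X` whose
eigenvalue `μ` has `|μ| = ‖X‖`, the quadratic form of `A - B` at `v` is
`μ (⟨v, √A v⟩ + ⟨v, √B v⟩)`. Both brackets are at least `√C` because `√A, √B ≥ √C`, while the
quadratic form is at most `‖A - B‖` in absolute value; hence `2 √C ‖X‖ ≤ ‖A - B‖`.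
-/

open Matrix
open scoped Matrix.Norms.L2Operator

section OldSqrt

open scoped ComplexOrder

/-- The square root of a positive semidefinite matrix, as defined in Mathlib of December 2024
(`Matrix.PosSemidef.sqrt`, since removed). -/
noncomputable def Matrix.PosSemidef.sqrt {n 𝕜 : Type*} [Fintype n] [DecidableEq n] [RCLike 𝕜]
    {A : Matrix n n 𝕜} (hA : A.PosSemidef) : Matrix n n 𝕜 :=
  hA.1.eigenvectorUnitary.1 * diagonal ((↑) ∘ (Real.sqrt ∘ hA.1.eigenvalues)) *
    (star hA.1.eigenvectorUnitary : Matrix n n 𝕜)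

end OldSqrt

open scoped MatrixOrder ComplexOrder RealInnerProductSpace

section StarOrderedAlgebra

variable {A : Type*} [Ring A] [StarRing A] [PartialOrder A] [StarOrderedRing A] [Algebra ℝ A]
  [StarModule ℝ A]

lemma IsSelfAdjoint.of_algebraMap_le {a : A} {c : ℝ} (ha : algebraMap ℝ A c ≤ a) :
    IsSelfAdjoint a := by
  simpa using (IsSelfAdjoint.of_nonneg (sub_nonneg.2 ha)).add (.algebraMap A (.all c))

lemma algebraMap_sqrt_le_cfc_sqrt [TopologicalSpace A]
    [ContinuousFunctionalCalculus ℝ A IsSelfAdjoint] [NonnegSpectrumClass ℝ A] {a : A} {c : ℝ}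
    (ha : algebraMap ℝ A c ≤ a) : algebraMap ℝ A (Real.sqrt c) ≤ cfc Real.sqrt a := by
  have hsa : IsSelfAdjoint a := .of_algebraMap_le ha
  rw [algebraMap_le_iff_le_spectrum hsa] at ha
  rw [algebraMap_le_iff_le_spectrum, cfc_map_spectrum Real.sqrt a hsa]
  rintro - ⟨x, hx, rfl⟩
  exact Real.sqrt_le_sqrt (ha x hx)

end StarOrderedAlgebra

namespace Matrix

variable {n : Type*} [Fintype n]

lemma PosSemidef.sqrt_eq_cfc [DecidableEq n] {𝕜 : Type*} [RCLike 𝕜] {A : Matrix n n 𝕜}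
    (hA : A.PosSemidef) : hA.sqrt = cfc Real.sqrt A := by
  rw [hA.1.cfc_eq]
  rfl

lemma PosSemidef.sqrt_mul_self [DecidableEq n] {𝕜 : Type*} [RCLike 𝕜] {A : Matrix n n 𝕜}
    (hA : A.PosSemidef) : hA.sqrt * hA.sqrt = A := by
  rw [hA.sqrt_eq_cfc, ← cfcₙ_eq_cfc, ← CFC.sqrt_eq_real_sqrt A hA.nonneg,
    CFC.sqrt_mul_sqrt_self A hA.nonneg]

lemma IsHermitian.algebraMap_le_iff [DecidableEq n] {𝕜 : Type*} [RCLike 𝕜] {A : Matrix n n 𝕜}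
    (hA : A.IsHermitian) {c : ℝ} : algebraMap ℝ _ c ≤ A ↔ ∀ i, c ≤ hA.eigenvalues i := by
  rw [algebraMap_le_iff_le_spectrum, hA.spectrum_real_eq_range_eigenvalues, Set.forall_mem_range]

lemma exists_mulVec_eq_smul_of_mem_spectrum [DecidableEq n] {K : Type*} [Field K]
    {M : Matrix n n K} {μ : K} (hμ : μ ∈ spectrum K M) : ∃ v ≠ 0, M *ᵥ v = μ • v := by
  rw [← spectrum_toLin', ← Module.End.hasEigenvalue_iff_mem_spectrum] at hμ
  obtain ⟨v, hv⟩ := hμ.exists_hasEigenvector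
  exact ⟨v, hv.2, hv.apply_eq_smul⟩

lemma IsHermitian.dotProduct_mulVec_eq_mulVec_dotProduct {M : Matrix n n ℝ} (hM : M.IsHermitian) (v w : n → ℝ) :
    v ⬝ᵥ (M *ᵥ w) = (M *ᵥ v) ⬝ᵥ w := by
  rw [dotProduct_mulVec, ← mulVec_transpose, ← conjTranspose_eq_transpose_of_trivial, hM.eq]

lemma abs_dotProduct_mulVec_le [DecidableEq n] (M : Matrix n n ℝ) (v : n → ℝ) :
    |v ⬝ᵥ (M *ᵥ v)| ≤ ‖M‖ * (v ⬝ᵥ v) := by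
  set w : EuclideanSpace ℝ n := WithLp.toLp 2 v
  have hinner : ⟪w, (EuclideanSpace.equiv n ℝ).symm (M *ᵥ v)⟫ = v ⬝ᵥ (M *ᵥ v) := by
    simp [w, EuclideanSpace.inner_eq_star_dotProduct, dotProduct_comm]
  have hnorm : ‖w‖ ^ 2 = v ⬝ᵥ v := by
    rw [← real_inner_self_eq_norm_sq, EuclideanSpace.inner_eq_star_dotProduct, star_trivial]
  calc |v ⬝ᵥ (M *ᵥ v)| ≤ ‖w‖ * ‖(EuclideanSpace.equiv n ℝ).symm (M *ᵥ v)‖ :=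
        hinner ▸ abs_real_inner_le_norm _ _
    _ ≤ ‖w‖ * (‖M‖ * ‖w‖) := by gcongr; exact M.l2_opNorm_mulVec w
    _ = ‖M‖ * (v ⬝ᵥ v) := by rw [← hnorm]; ring

lemma mul_dotProduct_self_le_of_algebraMap_le [DecidableEq n] {S : Matrix n n ℝ} {c : ℝ}
    (hS : algebraMap ℝ _ c ≤ S) (v : n → ℝ) : c * (v ⬝ᵥ v) ≤ v ⬝ᵥ (S *ᵥ v) := by
  have := (le_iff.1 hS).dotProduct_mulVec_nonneg v
  rwa [star_trivial, sub_mulVec, dotProduct_sub, Algebra.algebraMap_eq_smul_one, smul_mulVec,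
    one_mulVec, dotProduct_smul, smul_eq_mul, sub_nonneg] at this

theorem norm_sub_le_norm_mul_self_sub_div [DecidableEq n] {S T : Matrix n n ℝ} {c : ℝ}
    (hc : 0 < c) (hS : algebraMap ℝ _ c ≤ S) (hT : algebraMap ℝ _ c ≤ T) :
    ‖S - T‖ ≤ ‖S * S - T * T‖ / (2 * c) := by
  cases isEmpty_or_nonempty n
  · rw [Subsingleton.elim (S - T) 0, norm_zero]
    positivity
  have hX : IsSelfAdjoint (S - T) := (IsSelfAdjoint.of_algebraMap_le hS).sub (.of_algebraMap_le hT)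
  obtain ⟨μ, hμ, hμX : ‖μ‖ = ‖S - T‖⟩ :=
    (IsometricContinuousFunctionalCalculus.isGreatest_norm_spectrum (𝕜 := ℝ) _ hX).1
  obtain ⟨v, hv, hXv⟩ := exists_mulVec_eq_smul_of_mem_spectrum hμ
  have hvv : 0 < v ⬝ᵥ v :=
    (Fintype.sum_nonneg fun i => mul_self_nonneg (v i)).lt_of_ne' (dotProduct_self_eq_zero.not.2 hv)
  have hsplit : v ⬝ᵥ ((S * S - T * T) *ᵥ v) = μ * (v ⬝ᵥ (S *ᵥ v) + v ⬝ᵥ (T *ᵥ v)) := by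
    have : S * S - T * T = S * (S - T) + (S - T) * T := by noncomm_ring
    rw [this, add_mulVec, ← mulVec_mulVec, ← mulVec_mulVec, dotProduct_add,
      IsHermitian.dotProduct_mulVec_eq_mulVec_dotProduct hX v, hXv, mulVec_smul, dotProduct_smul, smul_dotProduct,
      smul_eq_mul, smul_eq_mul, mul_add]
  have hlower := add_le_add (mul_dotProduct_self_le_of_algebraMap_le hS v)
    (mul_dotProduct_self_le_of_algebraMap_le hT v)
  have hsum : 0 ≤ v ⬝ᵥ (S *ᵥ v) + v ⬝ᵥ (T *ᵥ v) := le_trans (by positivity) hlower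
  rw [le_div_iff₀ (by positivity)]
  refine le_of_mul_le_mul_right ?_ hvv
  calc ‖S - T‖ * (2 * c) * (v ⬝ᵥ v) = |μ| * (c * (v ⬝ᵥ v) + c * (v ⬝ᵥ v)) := by
        rw [← hμX, Real.norm_eq_abs]; ring
    _ ≤ |μ| * (v ⬝ᵥ (S *ᵥ v) + v ⬝ᵥ (T *ᵥ v)) := by gcongr
    _ = |v ⬝ᵥ ((S * S - T * T) *ᵥ v)| := by rw [hsplit, abs_mul, abs_of_nonneg hsum]
    _ ≤ ‖S * S - T * T‖ * (v ⬝ᵥ v) := abs_dotProduct_mulVec_le _ v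

end Matrix

/-- For symmetric positive definite `A`, `B` with smallest eigenvalues at least `C > 0`,
`‖A^{1/2} - B^{1/2}‖₂ ≤ ‖A - B‖₂ / (2√C)`. -/
theorem stmt_1 (d : ℕ) (A B : Matrix (Fin d) (Fin d) ℝ)
    (hA : A.PosDef) (hB : B.PosDef) (C : ℝ) (hC : 0 < C)
    (hAev : ∀ i, C ≤ hA.1.eigenvalues i) (hBev : ∀ i, C ≤ hB.1.eigenvalues i) :
    ‖hA.posSemidef.sqrt - hB.posSemidef.sqrt‖ ≤ ‖A - B‖ / (2 * Real.sqrt C) := by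
  have hsA : algebraMap ℝ _ (Real.sqrt C) ≤ hA.posSemidef.sqrt :=
    hA.posSemidef.sqrt_eq_cfc ▸ algebraMap_sqrt_le_cfc_sqrt (hA.1.algebraMap_le_iff.2 hAev)
  have hsB : algebraMap ℝ _ (Real.sqrt C) ≤ hB.posSemidef.sqrt :=
    hB.posSemidef.sqrt_eq_cfc ▸ algebraMap_sqrt_le_cfc_sqrt (hB.1.algebraMap_le_iff.2 hBev)
  calc ‖hA.posSemidef.sqrt - hB.posSemidef.sqrt‖
      ≤ ‖hA.posSemidef.sqrt * hA.posSemidef.sqrt - hB.posSemidef.sqrt * hB.posSemidef.sqrt‖ /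
          (2 * Real.sqrt C) :=
        norm_sub_le_norm_mul_self_sub_div (Real.sqrt_pos.2 hC) hsA hsB
    _ = ‖A - B‖ / (2 * Real.sqrt C) := by
        rw [hA.posSemidef.sqrt_mul_self, hB.posSemidef.sqrt_mul_self]
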